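/- arXiv:1303.2725 — 3 statements merged into one kernel-verified Lean document; each statement's English description precedes it below -/
import Mathlib

section
/- Let h ∈ ℝᵐ have all nonzero entries with sign vector v, and let A be an m×k real matrix and B an n×k real matrix. Define f(g) = ‖h + A g‖₁ + ‖B g‖₁. Then g = 0 is a global minimum of f if and only if |vᵀ A g| ≤ ‖B g‖₁ for all g ∈ ℝᵏ. -/
/-!
Write `v = sign h`. Termwise `|hᵢ + aᵢ| ≥ |hᵢ| + vᵢ aᵢ`, with equality once `|aᵢ| ≤ |hᵢ|`; since
every `hᵢ ≠ 0`, for small `t > 0` this makes `f (t • g) = f 0 + t (vᵀ A g + ‖B g‖₁)` exactly.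
So `0` is a minimum iff `vᵀ A g + ‖B g‖₁ ≥ 0` for every `g`, and replacing `g` by `-g`
turns this into `|vᵀ A g| ≤ ‖B g‖₁`.
-/

open Finset Filter Topology Matrix

namespace Real

theorem abs_add_sign_mul_le_abs_add (x y : ℝ) : |x| + sign x * y ≤ |x + y| := by
  rcases lt_trichotomy x 0 with hx | rfl | hx
  · rw [abs_of_neg hx, sign_of_neg hx]
    linarith [neg_abs_le (x + y)]
  · simp
  · rw [abs_of_pos hx, sign_of_pos hx]
    linarith [le_abs_self (x + y)]

theorem abs_add_eq_abs_add_sign_mul {x y : ℝ} (hyx : |y| ≤ |x|) :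
    |x + y| = |x| + sign x * y := by
  rcases lt_trichotomy x 0 with hx | rfl | hx
  · rw [abs_of_neg hx, sign_of_neg hx] at *
    rw [abs_of_nonpos (by linarith [le_abs_self y])]
    ring
  · simp_all
  · rw [abs_of_pos hx, sign_of_pos hx] at *
    rw [abs_of_nonneg (by linarith [neg_abs_le y])]
    ring

end Real

section
variable {ι : Type*} [Fintype ι]

theorem sum_abs_add_sign_mul_le_sum_abs_add (h a : ι → ℝ) :
    ∑ i, |h i| + ∑ i, Real.sign (h i) * a i ≤ ∑ i, |h i + a i| := by
  rw [← sum_add_distrib]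
  exact sum_le_sum fun i _ ↦ Real.abs_add_sign_mul_le_abs_add _ _

theorem eventually_sum_abs_add_mul_eq {h : ι → ℝ} (hh : ∀ i, h i ≠ 0) (a : ι → ℝ) :
    ∀ᶠ t in 𝓝 (0 : ℝ),
      ∑ i, |h i + t * a i| = ∑ i, |h i| + t * ∑ i, Real.sign (h i) * a i := by
  have small : ∀ᶠ t in 𝓝 (0 : ℝ), ∀ i, |t * a i| < |h i| :=
    eventually_all.2 fun i ↦ ContinuousAt.eventually_lt (by fun_prop) continuousAt_const
      (by simpa using hh i)
  filter_upwards [small] with t ht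
  rw [mul_sum, ← sum_add_distrib]
  refine sum_congr rfl fun i _ ↦ ?_
  rw [Real.abs_add_eq_abs_add_sign_mul (ht i).le, mul_left_comm]

end

theorem nonneg_of_forall_le_of_eventually_eq_add_mul {φ : ℝ → ℝ} {c : ℝ}
    (hmin : ∀ t, φ 0 ≤ φ t) (hlin : ∀ᶠ t in 𝓝[>] 0, φ t = φ 0 + t * c) : 0 ≤ c := by
  obtain ⟨t, ht, heq⟩ := (eventually_mem_nhdsWithin.and hlin).exists
  have : φ 0 ≤ φ 0 + t * c := heq ▸ hmin t
  exact (mul_nonneg_iff_of_pos_left (Set.mem_Ioi.1 ht)).1 (by linarith)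

/-- `g = 0` is a global minimum of `f(g) = ‖h + A g‖₁ + ‖B g‖₁` (all entries of `h`
nonzero, `v` the sign vector of `h`) iff `|vᵀ A g| ≤ ‖B g‖₁` for all `g`. -/
theorem l1_global_min_iff {m n k : ℕ}
    (h : Fin m → ℝ) (hh : ∀ i, h i ≠ 0)
    (v : Fin m → ℝ) (hv : ∀ i, v i = Real.sign (h i))
    (A : Matrix (Fin m) (Fin k) ℝ) (B : Matrix (Fin n) (Fin k) ℝ)
    (f : (Fin k → ℝ) → ℝ)
    (hf : f = fun g => (∑ i, |h i + A.mulVec g i|) + ∑ j, |B.mulVec g j|) :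
    (∀ g : Fin k → ℝ, f 0 ≤ f g) ↔
      ∀ g : Fin k → ℝ, |∑ i, v i * A.mulVec g i| ≤ ∑ j, |B.mulVec g j| := by
  simp only [hv]
  have f_zero : f 0 = ∑ i, |h i| := by simp [hf]
  have f_smul (t : ℝ) (g : Fin k → ℝ) :
      f (t • g) = ∑ i, |h i + t * (A *ᵥ g) i| + |t| * ∑ j, |(B *ᵥ g) j| := by
    simp [hf, mulVec_smul, abs_mul, mul_sum]
  have directional (g : Fin k → ℝ) (hmin : ∀ t : ℝ, f 0 ≤ f (t • g)) :
      0 ≤ ∑ i, Real.sign (h i) * (A *ᵥ g) i + ∑ j, |(B *ᵥ g) j| := by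
    refine nonneg_of_forall_le_of_eventually_eq_add_mul (φ := fun t ↦ f (t • g))
      (fun t ↦ zero_smul ℝ g ▸ hmin t) ?_
    filter_upwards [eventually_mem_nhdsWithin,
      (eventually_sum_abs_add_mul_eq hh (A *ᵥ g)).filter_mono nhdsWithin_le_nhds] with t ht hlin
    rw [zero_smul, f_zero, f_smul, hlin, abs_of_pos ht]
    ring
  constructor
  · intro hmin g
    have hneg := directional (-g) fun t ↦ hmin _
    simp only [mulVec_neg, Pi.neg_apply, mul_neg, sum_neg_distrib, abs_neg] at hneg
    exact abs_le.2 ⟨by linarith [directional g fun t ↦ hmin _], by linarith⟩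
  · intro hcond g
    have hlower := sum_abs_add_sign_mul_le_sum_abs_add h (A *ᵥ g)
    calc f 0 = ∑ i, |h i| := f_zero
      _ ≤ ∑ i, |h i + (A *ᵥ g) i| + ∑ j, |(B *ᵥ g) j| := by
        linarith [neg_abs_le (∑ i, Real.sign (h i) * (A *ᵥ g) i), hcond g]
      _ = f g := by rw [hf]
end

section
/- (Necessity direction.) Let h ∈ ℝᵐ have all nonzero entries with sign vector v, A an m×k real matrix, B an n×k real matrix. If ‖h + A g‖₁ + ‖B g‖₁ ≥ ‖h‖₁ for all g ∈ ℝᵏ, then |vᵀ A g| ≤ ‖B g‖₁ for all g ∈ ℝᵏ. -/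
/-!
Along a ray `t ↦ t • g`, every coordinate of `h + t • A g` keeps the sign of `h` for small
`t > 0`, so `‖h + t • A g‖₁ = ‖h‖₁ + t • vᵀ A g` there, while `‖B (t • g)‖₁ = t ‖B g‖₁`.
The hypothesis then gives `t (vᵀ A g + ‖B g‖₁) ≥ 0`; dividing by `t` and replacing `g` by `-g`
yields both halves of the absolute value bound.
-/

open Filter Topology Finset

lemma eventually_abs_eq_sign_mul {x : ℝ} (hx : x ≠ 0) :
    ∀ᶠ y in 𝓝 x, |y| = Real.sign x * y := by
  rcases hx.lt_or_gt with hneg | hpos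
  · filter_upwards [Iio_mem_nhds hneg] with y hy
    rw [abs_of_neg (Set.mem_Iio.mp hy), Real.sign_of_neg hneg, neg_one_mul]
  · filter_upwards [Ioi_mem_nhds hpos] with y hy
    rw [abs_of_pos (Set.mem_Ioi.mp hy), Real.sign_of_pos hpos, one_mul]

lemma eventually_sum_abs_add_mul {ι : Type*} [Fintype ι] {h : ι → ℝ} (hh : ∀ i, h i ≠ 0)
    (a : ι → ℝ) :
    ∀ᶠ t in 𝓝 (0 : ℝ),
      ∑ i, |h i + t * a i| = ∑ i, |h i| + t * ∑ i, Real.sign (h i) * a i := by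
  have hcoord : ∀ i, ∀ᶠ t in 𝓝 (0 : ℝ),
      |h i + t * a i| = |h i| + t * (Real.sign (h i) * a i) := by
    intro i
    have hsign := eventually_abs_eq_sign_mul (hh i)
    have hline : Tendsto (fun t : ℝ => h i + t * a i) (𝓝 0) (𝓝 (h i)) :=
      (by fun_prop : Continuous fun t : ℝ => h i + t * a i).tendsto' 0 _ (by simp)
    filter_upwards [hline.eventually hsign] with t ht
    rw [ht, mul_add, hsign.self_of_nhds]
    ring
  filter_upwards [eventually_all.mpr hcoord] with t ht
  rw [sum_congr rfl fun i _ => ht i, sum_add_distrib, mul_sum]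

lemma neg_le_sum_sign_mul_of_forall_pos {ι : Type*} [Fintype ι] {h : ι → ℝ}
    (hh : ∀ i, h i ≠ 0) (a : ι → ℝ) (c : ℝ)
    (hmin : ∀ t > 0, ∑ i, |h i| ≤ ∑ i, |h i + t * a i| + t * c) :
    -c ≤ ∑ i, Real.sign (h i) * a i := by
  obtain ⟨t, hlin, ht⟩ :=
    ((eventually_nhdsWithin_of_eventually_nhds (eventually_sum_abs_add_mul hh a)).and
      (self_mem_nhdsWithin (s := Set.Ioi (0 : ℝ)))).exists
  have hpos : 0 ≤ t * (∑ i, Real.sign (h i) * a i + c) := by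
    have := hmin t ht
    rw [hlin] at this
    linarith
  linarith [nonneg_of_mul_nonneg_right hpos ht]

open Finset in
/-- Necessity: if `‖h + A g‖₁ + ‖B g‖₁ ≥ ‖h‖₁` for all `g` (with `v` the sign vector of
the everywhere-nonzero `h`), then `|vᵀ A g| ≤ ‖B g‖₁` for all `g`. -/
theorem l1_identifiability_necessary {m n k : ℕ}
    (h : Fin m → ℝ) (hh : ∀ i, h i ≠ 0)
    (v : Fin m → ℝ) (hv : ∀ i, v i = Real.sign (h i))
    (A : Matrix (Fin m) (Fin k) ℝ) (B : Matrix (Fin n) (Fin k) ℝ)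
    (hmin : ∀ g : Fin k → ℝ,
      ∑ i, |h i| ≤ (∑ i, |h i + A.mulVec g i|) + ∑ j, |B.mulVec g j|) :
    ∀ g : Fin k → ℝ, |∑ i, v i * A.mulVec g i| ≤ ∑ j, |B.mulVec g j| := by
  have key : ∀ g : Fin k → ℝ, -∑ j, |B.mulVec g j| ≤ ∑ i, v i * A.mulVec g i := by
    intro g
    simp only [hv]
    refine neg_le_sum_sign_mul_of_forall_pos hh _ _ fun t ht => ?_
    simpa [Matrix.mulVec_smul, abs_mul, abs_of_pos ht, mul_sum] using hmin (t • g)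
  intro g
  have hneg := key (-g)
  simp only [Matrix.mulVec_neg, Pi.neg_apply, mul_neg, abs_neg, sum_neg_distrib] at hneg
  exact abs_le.mpr ⟨key g, by linarith⟩
end

section
/- (Sufficient condition for ℓp local identifiability.) Let 0 < p < 1, let h ∈ ℝᵐ have all nonzero entries, let A be an m×k real matrix, and let B be an n×k real matrix with trivial kernel. Define v ∈ ℝᵐ by vᵢ = p · sign(hᵢ) · |hᵢ|^{p−1}. If |vᵀ A g| ≤ ‖B g‖₁ for all g ∈ ℝᵏ, then g = 0 is a local minimum of f(g) = ‖h + A g‖ₚᵖ + ‖B g‖ₚᵖ, i.e., there is a neighborhood V of 0 with f(g) ≥ f(0) = ‖h‖ₚᵖ for all g ∈ V. -/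
/-!
Near `0`, `F g = ∑ |hᵢ + (A g)ᵢ|ᵖ` is differentiable with derivative `g ↦ vᵀ A g`, so
`F g ≥ F 0 + vᵀ A g - o(‖g‖) ≥ F 0 - 2 ‖B g‖₁`, using the hypothesis and `‖g‖ = O(‖B g‖₁)`
(trivial kernel). Since `p < 1`, `|t|ᵖ ≥ 2 |t|` for small `t`, so the penalty
`∑ |(B g)ⱼ|ᵖ ≥ 2 ‖B g‖₁` absorbs this loss.
-/

open Filter Topology Asymptotics

theorem hasDerivAt_abs_rpow_of_ne_zero (p : ℝ) {a : ℝ} (ha : a ≠ 0) :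
    HasDerivAt (fun x : ℝ => |x| ^ p) (p * Real.sign a * |a| ^ (p - 1)) a := by
  have hcomp : HasDerivAt (fun x : ℝ => |x| ^ p) (p * |a| ^ (p - 1) * SignType.sign a) a :=
    (Real.hasDerivAt_rpow_const (Or.inl (abs_ne_zero.mpr ha))).comp a (hasDerivAt_abs ha)
  convert hcomp using 1
  rcases ha.lt_or_gt with ha | ha
  · simp [Real.sign_of_neg ha, ha]
  · simp [Real.sign_of_pos ha, ha]

theorem mul_le_rpow_of_le_rpow_inv {p c t : ℝ} (hp : p < 1) (hc : 0 < c) (ht : 0 ≤ t)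
    (htc : t ≤ c ^ (p - 1)⁻¹) : c * t ≤ t ^ p := by
  rcases ht.eq_or_lt with rfl | ht
  · simp [Real.rpow_nonneg]
  calc c * t = (c ^ (p - 1)⁻¹) ^ (p - 1) * t := by
        rw [← Real.rpow_mul hc.le, inv_mul_cancel₀ (by linarith), Real.rpow_one]
    _ ≤ t ^ (p - 1) * t :=
        mul_le_mul_of_nonneg_right (Real.rpow_le_rpow_of_nonpos ht htc (by linarith)) ht.le
    _ = t ^ p := by rw [← Real.rpow_add_one ht.ne', sub_add_cancel]

theorem eventually_mul_abs_le_abs_rpow {p : ℝ} (hp : p < 1) (c : ℝ) :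
    ∀ᶠ t in 𝓝 (0 : ℝ), c * |t| ≤ |t| ^ p := by
  have hc : 0 < max c 1 := by positivity
  have hsmall : ∀ᶠ t in 𝓝 (0 : ℝ), |t| < max c 1 ^ (p - 1)⁻¹ :=
    (continuous_abs.tendsto' 0 0 abs_zero).eventually_lt_const (Real.rpow_pos_of_pos hc _)
  filter_upwards [hsmall] with t ht
  calc c * |t| ≤ max c 1 * |t| := by gcongr; exact le_max_left _ _
    _ ≤ |t| ^ p := mul_le_rpow_of_le_rpow_inv hp hc (abs_nonneg t) ht.le

theorem eventually_mul_sum_abs_le_sum_abs_rpow {ι : Type*} [Fintype ι] {p : ℝ} (hp : p < 1)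
    (c : ℝ) : ∀ᶠ x in 𝓝 (0 : ι → ℝ), c * ∑ i, |x i| ≤ ∑ i, |x i| ^ p := by
  have hcoord : ∀ i, ∀ᶠ x in 𝓝 (0 : ι → ℝ), c * |x i| ≤ |x i| ^ p := fun i =>
    (continuous_apply i).tendsto (0 : ι → ℝ) |>.eventually (eventually_mul_abs_le_abs_rpow hp c)
  filter_upwards [eventually_all.mpr hcoord] with x hx
  rw [Finset.mul_sum]
  exact Finset.sum_le_sum fun i _ => hx i

theorem HasFDerivAt.sum_abs_rpow {E ι : Type*} [NormedAddCommGroup E] [NormedSpace ℝ E]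
    [Fintype ι] (p : ℝ) {f : E → ι → ℝ} {f' : E →L[ℝ] ι → ℝ} {x : E} (hf : HasFDerivAt f f' x)
    (hfx : ∀ i, f x i ≠ 0) :
    HasFDerivAt (fun y => ∑ i, |f y i| ^ p)
      (∑ i, (p * Real.sign (f x i) * |f x i| ^ (p - 1)) •
        (ContinuousLinearMap.proj i).comp f') x :=
  HasFDerivAt.fun_sum fun i _ =>
    (hasDerivAt_abs_rpow_of_ne_zero p (hfx i)).comp_hasFDerivAt (f := fun y => f y i) x
      (hasFDerivAt_pi'.mp hf i)

theorem pi_norm_le_sum_abs {ι : Type*} [Fintype ι] (x : ι → ℝ) : ‖x‖ ≤ ∑ i, |x i| :=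
  (pi_norm_le_iff_of_nonneg (Finset.sum_nonneg fun _ _ => abs_nonneg _)).mpr fun i =>
    Finset.single_le_sum (f := fun i => |x i|) (fun _ _ => abs_nonneg _) (Finset.mem_univ i)

theorem Matrix.isBigO_sum_abs_mulVec {m n : Type*} [Fintype m] [Fintype n]
    (B : Matrix m n ℝ) (hB : ∀ g : n → ℝ, B.mulVec g = 0 → g = 0) :
    (fun g : n → ℝ => g) =O[⊤] fun g => ∑ j, |B.mulVec g j| := by
  obtain ⟨K, -, hK⟩ := LinearMap.exists_antilipschitzWith B.mulVecLin
    (LinearMap.ker_eq_bot'.mpr (by simpa using hB))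
  refine IsBigO.of_bound K (Eventually.of_forall fun g => ?_)
  calc ‖g‖ ≤ K * ‖B.mulVec g‖ := by simpa using hK.le_mul_dist g 0
    _ ≤ K * ‖∑ j, |B.mulVec g j|‖ := by
        gcongr
        exact (pi_norm_le_sum_abs _).trans (Real.le_norm_self _)

theorem eventually_le_add_of_hasFDerivAt {E : Type*} [NormedAddCommGroup E] [NormedSpace ℝ E]
    {F G N : E → ℝ} {L : E →L[ℝ] ℝ} (hF : HasFDerivAt F L 0)
    (hN : (fun g => g) =O[𝓝 0] N) (hL : ∀ g, |L g| ≤ N g)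
    (hG : ∀ᶠ g in 𝓝 0, 2 * N g ≤ G g) : ∀ᶠ g in 𝓝 0, F 0 ≤ F g + G g := by
  have hrem : (fun g => F g - F 0 - L g) =o[𝓝 0] N := by
    simpa using (hasFDerivAt_iff_isLittleO_nhds_zero.mp hF).trans_isBigO hN
  filter_upwards [hrem.def one_pos, hG] with g hg hgG
  have hNg : |N g| = N g := abs_of_nonneg ((abs_nonneg _).trans (hL g))
  rw [Real.norm_eq_abs, Real.norm_eq_abs, hNg, one_mul] at hg
  linarith [neg_abs_le (L g), hL g, neg_abs_le (F g - F 0 - L g)]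

open Finset in
theorem lp_local_min_sufficient_general {m n k : ℕ} (p : ℝ) (hp1 : p < 1)
    (h : Fin m → ℝ) (hh : ∀ i, h i ≠ 0)
    (A : Matrix (Fin m) (Fin k) ℝ) (B : Matrix (Fin n) (Fin k) ℝ)
    (hB : ∀ g : Fin k → ℝ, B.mulVec g = 0 → g = 0)
    (v : Fin m → ℝ) (hv : ∀ i, v i = p * Real.sign (h i) * |h i| ^ (p - 1))
    (hcond : ∀ g : Fin k → ℝ, |∑ i, v i * A.mulVec g i| ≤ ∑ j, |B.mulVec g j|) :
    ∃ V ∈ nhds (0 : Fin k → ℝ), ∀ g ∈ V,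
      (∑ i, |h i| ^ p) ≤ (∑ i, |h i + A.mulVec g i| ^ p) + ∑ j, |B.mulVec g j| ^ p := by
  have hAffine : HasFDerivAt (fun g => h + A.mulVec g)
      (LinearMap.toContinuousLinearMap A.mulVecLin) 0 :=
    (LinearMap.toContinuousLinearMap A.mulVecLin).hasFDerivAt.const_add h
  have hF := hAffine.sum_abs_rpow p (by simpa using hh)
  have hpenalty :
      ∀ᶠ g in 𝓝 (0 : Fin k → ℝ), 2 * ∑ j, |B.mulVec g j| ≤ ∑ j, |B.mulVec g j| ^ p :=
    (B.mulVecLin.continuous_of_finiteDimensional.tendsto' 0 0 (by simp)).eventually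
      (eventually_mul_sum_abs_le_sum_abs_rpow hp1 2)
  have hlocal := eventually_le_add_of_hasFDerivAt hF
    ((B.isBigO_sum_abs_mulVec hB).mono le_top) (fun g => by simpa [hv] using hcond g) hpenalty
  exact ⟨_, hlocal, fun g hg => by simpa using hg⟩

open Finset in
/-- Sufficient condition for `ℓp` local identifiability: with `0 < p < 1`, `h` having
all nonzero entries, `B` with trivial kernel, and `vᵢ = p sign(hᵢ) |hᵢ|^(p−1)`, if
`|vᵀ A g| ≤ ‖B g‖₁` for all `g`, then `g = 0` is a local minimum of
`f(g) = ‖h + A g‖ₚᵖ + ‖B g‖ₚᵖ`. -/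
theorem lp_local_min_sufficient {m n k : ℕ} (p : ℝ) (hp0 : 0 < p) (hp1 : p < 1)
    (h : Fin m → ℝ) (hh : ∀ i, h i ≠ 0)
    (A : Matrix (Fin m) (Fin k) ℝ) (B : Matrix (Fin n) (Fin k) ℝ)
    (hB : ∀ g : Fin k → ℝ, B.mulVec g = 0 → g = 0)
    (v : Fin m → ℝ) (hv : ∀ i, v i = p * Real.sign (h i) * |h i| ^ (p - 1))
    (hcond : ∀ g : Fin k → ℝ, |∑ i, v i * A.mulVec g i| ≤ ∑ j, |B.mulVec g j|) :
    ∃ V ∈ nhds (0 : Fin k → ℝ), ∀ g ∈ V,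
      (∑ i, |h i| ^ p) ≤ (∑ i, |h i + A.mulVec g i| ^ p) + ∑ j, |B.mulVec g j| ^ p :=
  lp_local_min_sufficient_general p hp1 h hh A B hB v hv hcond
end
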